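/- Let n ≥ 4 be an integer. Let K_{6n} be given a red/blue edge-coloring that is (F_n, K_4)-free and suppose its vertex set is partitioned into three pairwise disjoint red cliques G_1, G_2, G_3 each of order 2n. Let w be a new vertex joined to some vertices of K_{6n} with red/blue colored edges such that the resulting coloring is still (F_n, K_4)-free. Then it is not the case that w has at least 2 blue neighbors in every one of G_1, G_2, and G_3. -/

import Mathlib

open SimpleGraph

/-- The fan graph `Fₙ`: the join of a single vertex (the center, `none`) with `n`
pairwise disjoint edges (`some (i, a)` is matched with `some (i, !a)`). -/
def Fan (n : ℕ) : SimpleGraph (Option (Fin n × Bool)) where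
  Adj u v := u ≠ v ∧ (u = none ∨ v = none ∨ ∃ i a b, u = some (i, a) ∧ v = some (i, b))
  symm := ⟨by
    rintro u v ⟨h1, h2⟩
    exact ⟨h1.symm, by tauto⟩⟩
  loopless := ⟨by rintro u ⟨h1, -⟩; exact h1 rfl⟩

/-- `G` contains a subgraph isomorphic to the fan graph `Fₙ`. -/
def ContainsFan {V : Type*} (G : SimpleGraph V) (n : ℕ) : Prop :=
  ∃ f : Option (Fin n × Bool) ↪ V, ∀ u v, (Fan n).Adj u v → G.Adj (f u) (f v)

/-- `G` contains a subgraph isomorphic to `K₄`. -/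
def ContainsK4 {V : Type*} (G : SimpleGraph V) : Prop :=
  ∃ a b c d : V, G.Adj a b ∧ G.Adj a c ∧ G.Adj a d ∧ G.Adj b c ∧ G.Adj b d ∧ G.Adj c d

/-- Extend a graph on `V` by one extra vertex (`none`) joined to the set `S`. -/
def extendGraph {V : Type*} (G : SimpleGraph V) (S : Set V) : SimpleGraph (Option V) where
  Adj u v :=
    match u, v with
    | some a, some b => G.Adj a b
    | none, some a => a ∈ S
    | some a, none => a ∈ S
    | none, none => False
  symm := ⟨by rintro (_ | a) (_ | b) h <;> first | exact h | exact G.adj_symm h⟩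
  loopless := ⟨by rintro (_ | a) h; exacts [h, G.irrefl h]⟩

/-!
A vertex `u` of a red clique of order `2n` that lies in a red triangle `u v z` with `v`, `z`
outside the clique is the centre of a red `Fₙ`: `n - 1` triangles inside the clique and `u v z`.
So between two parts the red edges form a matching and no red triangle meets all three parts,
while a blue triangle among the blue neighbours of `w` would give a blue `K₄`. On two blue
neighbours of `w` in each part this is impossible: every `x` in the first part has blue
neighbours `y`, `z` in the other two parts, these are red-joined, and `x` is red to all other
vertices there; the two choices of `x` give different `y`'s and `z`'s, and then the first `x`
closes a red triangle with the `y`, `z` of the second.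
-/

open Finset

variable {V : Type*} {G : SimpleGraph V}

lemma containsFan_of_cone {n : ℕ} {ι : Type*} [Fintype ι] (hι : Fintype.card ι = n) (c : V)
    (p : ι × Bool ↪ V) (hc : ∀ x, G.Adj c (p x)) (hp : ∀ i, G.Adj (p (i, true)) (p (i, false))) :
    ContainsFan G n := by
  subst hι
  let f := ((Fintype.equivFin ι).symm.prodCongr (Equiv.refl Bool)).toEmbedding.trans p
  refine ⟨f.optionElim c fun ⟨x, hx⟩ => G.irrefl (hx ▸ hc _), ?_⟩
  rintro (_ | ⟨i, a⟩) (_ | ⟨j, b⟩) ⟨hne, h⟩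
  · exact absurd rfl hne
  · exact hc _
  · exact (hc _).symm
  · obtain ⟨k, a', b', ⟨rfl, rfl⟩, ⟨rfl, rfl⟩⟩ : ∃ k a' b', (i, a) = (k, a') ∧ (j, b) = (k, b') := by
      simpa using h
    cases a <;> cases b
    · exact absurd rfl hne
    · exact (hp _).symm
    · exact hp _
    · exact absurd rfl hne

lemma containsFan_of_cone_over_cliques {A B : Finset V} (hAB : Disjoint A B)
    (hA : G.IsClique (A : Set V)) (hB : G.IsClique (B : Set V)) {c : V}
    (hcA : ∀ a ∈ A, G.Adj c a) (hcB : ∀ b ∈ B, G.Adj c b) {k l : ℕ}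
    (hk : 2 * k ≤ #A) (hl : 2 * l ≤ #B) : ContainsFan G (k + l) := by
  obtain ⟨gA⟩ : Nonempty (Fin k × Bool ↪ A) :=
    Function.Embedding.nonempty_of_card_le (by simpa [mul_comm] using hk)
  obtain ⟨gB⟩ : Nonempty (Fin l × Bool ↪ B) :=
    Function.Embedding.nonempty_of_card_le (by simpa [mul_comm] using hl)
  let q : (Fin k × Bool) ⊕ (Fin l × Bool) ↪ V :=
    ⟨Sum.elim (fun x => gA x) (fun x => gB x),
      (Subtype.val_injective.comp gA.injective).sumElim (Subtype.val_injective.comp gB.injective)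
        fun x y h => Finset.disjoint_left.mp hAB (gA x).2 (by simpa [← h] using (gB y).2)⟩
  refine containsFan_of_cone (ι := Fin k ⊕ Fin l) (by simp)
    c ((Equiv.sumProdDistrib _ _ _).toEmbedding.trans q) ?_ ?_
  · rintro ⟨i | i, a⟩
    · exact hcA _ (gA _).2
    · exact hcB _ (gB _).2
  · rintro (i | i)
    · exact hA (gA _).2 (gA _).2 fun h => by simpa using gA.injective (Subtype.ext h)
    · exact hB (gB _).2 (gB _).2 fun h => by simpa using gB.injective (Subtype.ext h)

lemma containsFan_of_triangle_off_clique {m : ℕ} {K : Finset V} (hK : G.IsClique (K : Set V))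
    (hcard : 2 * m + 1 ≤ #K) {u v z : V} (hu : u ∈ K) (hv : v ∉ K) (hz : z ∉ K)
    (huv : G.Adj u v) (huz : G.Adj u z) (hvz : G.Adj v z) : ContainsFan G (m + 1) := by
  classical
  refine containsFan_of_cone_over_cliques (A := K.erase u) (B := {v, z}) ?_
    (hK.subset (by simp)) (by simpa [isClique_pair] using fun _ => hvz)
    (fun a ha => hK hu (mem_of_mem_erase ha) (ne_of_mem_erase ha).symm) ?_ ?_ ?_
  · simp [mem_erase, hv, hz]
  · simp [huv, huz]
  · rw [card_erase_of_mem hu]; omega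
  · rw [card_pair hvz.ne]

lemma containsK4_extendGraph_of_triangle {H : SimpleGraph V} {S : Set V} {a b c : V}
    (ha : a ∈ S) (hb : b ∈ S) (hc : c ∈ S) (hab : H.Adj a b) (hac : H.Adj a c)
    (hbc : H.Adj b c) : ContainsK4 (extendGraph H S) :=
  ⟨none, some a, some b, some c, ha, hb, hc, hab, hac, hbc⟩

lemma exists_not_adj_of_subsingleton {x : V} {s : Set V} (hs : s.Nontrivial)
    (hx : (G.neighborSet x ∩ s).Subsingleton) : ∃ y ∈ s, ¬ G.Adj x y := by
  obtain ⟨a, ha, b, hb, hab⟩ := hs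
  by_contra! h
  exact hab (hx ⟨h a ha, ha⟩ ⟨h b hb, hb⟩)

lemma exists_adj_forall_adj_of_ne {x : V} {Y Z : Set V} (hY : Y.Nontrivial) (hZ : Z.Nontrivial)
    (hxY : (G.neighborSet x ∩ Y).Subsingleton) (hxZ : (G.neighborSet x ∩ Z).Subsingleton)
    (hYZ : ∀ y ∈ Y, (G.neighborSet y ∩ Z).Subsingleton)
    (hZY : ∀ z ∈ Z, (G.neighborSet z ∩ Y).Subsingleton)
    (hblue : ∀ y ∈ Y, ∀ z ∈ Z, G.Adj x y ∨ G.Adj x z ∨ G.Adj y z) :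
    ∃ y ∈ Y, ∃ z ∈ Z, G.Adj y z ∧ (∀ y' ∈ Y, y' ≠ y → G.Adj x y') ∧
      ∀ z' ∈ Z, z' ≠ z → G.Adj x z' := by
  obtain ⟨y, hy, hxy⟩ := exists_not_adj_of_subsingleton hY hxY
  obtain ⟨z, hz, hxz⟩ := exists_not_adj_of_subsingleton hZ hxZ
  have hyz : G.Adj y z := by simpa [hxy, hxz] using hblue y hy z hz
  refine ⟨y, hy, z, hz, hyz, fun y' hy' hne => ?_, fun z' hz' hne => ?_⟩
  · have hy'z : ¬ G.Adj y' z := fun h => hne (hZY z hz ⟨h.symm, hy'⟩ ⟨hyz.symm, hy⟩)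
    simpa [hxz, hy'z] using hblue y' hy' z hz
  · have hyz' : ¬ G.Adj y z' := fun h => hne (hYZ y hy ⟨h, hz'⟩ ⟨hyz, hz⟩)
    simpa [hxy, hyz'] using hblue y hy z' hz'

lemma not_forall_nontrivial_of_no_monochromatic_triangle (P : Fin 3 → Set V)
    (hmatch : ∀ i j, i ≠ j → ∀ v ∈ P i, (G.neighborSet v ∩ P j).Subsingleton)
    (hred : ∀ x ∈ P 0, ∀ y ∈ P 1, ∀ z ∈ P 2, ¬ (G.Adj x y ∧ G.Adj x z ∧ G.Adj y z))
    (hblue : ∀ x ∈ P 0, ∀ y ∈ P 1, ∀ z ∈ P 2, G.Adj x y ∨ G.Adj x z ∨ G.Adj y z) :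
    ¬ ∀ i, (P i).Nontrivial := by
  intro hP
  obtain ⟨x₁, hx₁, x₂, hx₂, hx⟩ := hP 0
  have hparts (x) (hx : x ∈ P 0) := exists_adj_forall_adj_of_ne (hP 1) (hP 2)
    (hmatch 0 1 (by decide) x hx) (hmatch 0 2 (by decide) x hx) (hmatch 1 2 (by decide))
    (hmatch 2 1 (by decide)) (hblue x hx)
  obtain ⟨y₁, hy₁, z₁, hz₁, hyz₁, hx₁Y, hx₁Z⟩ := hparts x₁ hx₁
  obtain ⟨y₂, hy₂, z₂, hz₂, hyz₂, hx₂Y, -⟩ := hparts x₂ hx₂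
  have hy : y₁ ≠ y₂ := by
    rintro rfl
    obtain ⟨y, hy, hne⟩ := (hP 1).exists_ne y₁
    exact hx (hmatch 1 0 (by decide) y hy ⟨(hx₁Y y hy hne).symm, hx₁⟩ ⟨(hx₂Y y hy hne).symm, hx₂⟩)
  have hz : z₁ ≠ z₂ := by
    rintro rfl
    exact hy (hmatch 2 1 (by decide) z₁ hz₁ ⟨hyz₁.symm, hy₁⟩ ⟨hyz₂.symm, hy₂⟩)
  exact hred x₁ hx₁ y₂ hy₂ z₂ hz₂ ⟨hx₁Y y₂ hy₂ hy.symm, hx₁Z z₂ hz₂ hz.symm, hyz₂⟩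

theorem not_two_blue_in_every_part_general (n : ℕ) (hn : 4 ≤ n)
    (R : SimpleGraph (Fin (6 * n)))
    (hfree : ¬ ContainsFan R n ∧ ¬ ContainsK4 Rᶜ)
    (G : Fin 3 → Finset (Fin (6 * n)))
    (hcard : ∀ i, (G i).card = 2 * n)
    (hdisj : ∀ i j, i ≠ j → Disjoint (G i) (G j))
    (hclique : ∀ i, R.IsClique ↑(G i))
    (RedN BlueN : Finset (Fin (6 * n)))
    (hfree' : ¬ ContainsFan (extendGraph R ↑RedN) n ∧
      ¬ ContainsK4 (extendGraph Rᶜ ↑BlueN)) :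
    ¬ ∀ i, 2 ≤ (BlueN ∩ G i).card := by
  obtain ⟨m, rfl⟩ : ∃ m, n = m + 1 := ⟨n - 1, by omega⟩
  have hne {i j} (hij : i ≠ j) {u v} (hu : u ∈ G i) (hv : v ∈ G j) : u ≠ v :=
    fun h => Finset.disjoint_left.mp (hdisj i j hij) hu (h ▸ hv)
  have hred {i j k} (hij : i ≠ j) (hik : i ≠ k) {u v z} (hu : u ∈ G i) (hv : v ∈ G j)
      (hz : z ∈ G k) : ¬ (R.Adj u v ∧ R.Adj u z ∧ R.Adj v z) := fun ⟨huv, huz, hvz⟩ =>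
    hfree.1 <| containsFan_of_triangle_off_clique (hclique i) (by rw [hcard]; omega) hu
      (disjoint_right.mp (hdisj i j hij) hv) (disjoint_right.mp (hdisj i k hik) hz) huv huz hvz
  intro hall
  refine not_forall_nontrivial_of_no_monochromatic_triangle (G := R)
    (fun i => ↑(BlueN ∩ G i)) ?_ ?_ ?_ fun i => one_lt_card_iff_nontrivial.mp (hall i)
  · intro i j hij v hv a ⟨hva, ha⟩ b ⟨hvb, hb⟩
    by_contra hab
    exact hred hij hij (mem_inter.mp hv).2 (mem_inter.mp ha).2 (mem_inter.mp hb).2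
      ⟨hva, hvb, hclique j (mem_inter.mp ha).2 (mem_inter.mp hb).2 hab⟩
  · intro x hx y hy z hz
    exact hred (by decide) (by decide) (mem_inter.mp hx).2 (mem_inter.mp hy).2 (mem_inter.mp hz).2
  · intro x hx y hy z hz
    simp only [coe_inter, Set.mem_inter_iff, mem_coe] at hx hy hz
    by_contra! h
    exact hfree'.2 <| containsK4_extendGraph_of_triangle hx.1 hy.1 hz.1
      ⟨hne (by decide) hx.2 hy.2, h.1⟩ ⟨hne (by decide) hx.2 hz.2, h.2.1⟩
      ⟨hne (by decide) hy.2 hz.2, h.2.2⟩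

/-- Let `K_{6n}` carry an `(Fₙ, K₄)`-free coloring partitioned into three red
cliques `G 0, G 1, G 2` of order `2n`, and extend it by a new vertex `w` with red
neighbors `RedN` and blue neighbors `BlueN`, still `(Fₙ, K₄)`-free. Then `w` cannot
have at least `2` blue neighbors in every part. -/
theorem not_two_blue_in_every_part (n : ℕ) (hn : 4 ≤ n)
    (R : SimpleGraph (Fin (6 * n)))
    (hfree : ¬ ContainsFan R n ∧ ¬ ContainsK4 Rᶜ)
    (G : Fin 3 → Finset (Fin (6 * n)))
    (hcard : ∀ i, (G i).card = 2 * n)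
    (hdisj : ∀ i j, i ≠ j → Disjoint (G i) (G j))
    (hcover : ∀ v, ∃ i, v ∈ G i)
    (hclique : ∀ i, R.IsClique ↑(G i))
    (RedN BlueN : Finset (Fin (6 * n))) (hdisjN : Disjoint RedN BlueN)
    (hfree' : ¬ ContainsFan (extendGraph R ↑RedN) n ∧
      ¬ ContainsK4 (extendGraph Rᶜ ↑BlueN)) :
    ¬ ∀ i, 2 ≤ (BlueN ∩ G i).card :=
  not_two_blue_in_every_part_general n hn R hfree G hcard hdisj hclique RedN BlueN hfree'
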